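/- For |q|<1 and any complex u, ∑_{i,j≥0} (-1)^i u^{i+j} q^{i^2+2ij+2j^2-i-j} / ((q;q)_i (q^2;q^2)_j) = (u; q^2)_∞. -/

import Mathlib

open scoped BigOperators

noncomputable def qPoch (a q : ℂ) (n : ℕ) : ℂ :=
  ∏ k ∈ Finset.range n, (1 - a * q ^ k)

noncomputable def qPochInf (a q : ℂ) : ℂ :=
  ∏' k : ℕ, (1 - a * q ^ k)

/-!
Since `i² + 2ij + 2j² - i - j = 2·C(i+j, 2) + j²`, summing the (absolutely convergent) double
series along the antidiagonals `i + j = n` gives `∑ₙ (q²)^C(n,2) uⁿ Sₙ` with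
`Sₙ = ∑_{i+j=n} (-1)^i q^(j²) / ((q;q)_i (q²;q²)_j)`. A telescoping recurrence shows
`Sₙ = (-1)ⁿ / (q²;q²)ₙ`, so the series is Euler's expansion
`∑ₙ (-1)ⁿ Q^C(n,2) uⁿ / (Q;Q)ₙ = (u;Q)_∞` at `Q = q²`. Euler's expansion `F u` satisfies
`F u = (1 - u) F (Q u)`, hence `F u = (u;Q)_N F (Q^N u)`, and `F (Q^N u) → F 0 = 1`.
-/

open Finset Filter Topology

lemma qPoch_zero (a q : ℂ) : qPoch a q 0 = 1 := prod_range_zero _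

lemma qPoch_succ (a q : ℂ) (n : ℕ) : qPoch a q (n + 1) = qPoch a q n * (1 - a * q ^ n) :=
  prod_range_succ _ _

lemma qPoch_self_succ (q : ℂ) (n : ℕ) : qPoch q q (n + 1) = qPoch q q n * (1 - q ^ (n + 1)) := by
  rw [qPoch_succ, pow_succ']

lemma tendsto_qPoch_qPochInf {Q : ℂ} (hQ : ‖Q‖ < 1) (a : ℂ) :
    Tendsto (qPoch a Q) atTop (𝓝 (qPochInf a Q)) := by
  have : Multipliable fun k => 1 - a * Q ^ k := by
    simpa [sub_eq_add_neg] using Complex.multipliable_one_add_of_summable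
      ((summable_geometric_of_norm_lt_one hQ).mul_left a).neg
  exact this.tendsto_prod_tprod_nat

lemma one_sub_norm_pow_le_norm_qPoch {a Q : ℂ} (ha : ‖a‖ ≤ 1) (hQ : ‖Q‖ ≤ 1) (n : ℕ) :
    (1 - ‖a‖) ^ n ≤ ‖qPoch a Q n‖ := by
  rw [qPoch, norm_prod, pow_eq_prod_const]
  refine prod_le_prod (fun _ _ => sub_nonneg.2 ha) fun k _ => ?_
  calc 1 - ‖a‖ ≤ ‖(1 : ℂ)‖ - ‖a * Q ^ k‖ := by
        rw [norm_one, norm_mul, norm_pow]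
        gcongr
        exact mul_le_of_le_one_right (norm_nonneg a) (pow_le_one₀ (norm_nonneg Q) hQ)
    _ ≤ ‖1 - a * Q ^ k‖ := norm_sub_norm_le _ _

lemma norm_pow_div_qPoch_le {a Q : ℂ} (ha : ‖a‖ < 1) (hQ : ‖Q‖ ≤ 1) (x : ℂ) (n : ℕ) :
    ‖x ^ n / qPoch a Q n‖ ≤ (‖x‖ / (1 - ‖a‖)) ^ n := by
  rw [norm_div, norm_pow, div_pow]
  exact div_le_div_of_nonneg_left (by positivity) (pow_pos (sub_pos.2 ha) n)
    (one_sub_norm_pow_le_norm_qPoch ha.le hQ n)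

lemma one_sub_pow_ne_zero_of_not_isOfFinOrder {q : ℂ} (hq : ¬IsOfFinOrder q) {k : ℕ}
    (hk : k ≠ 0) : 1 - q ^ k ≠ 0 :=
  sub_ne_zero.2 fun h => hq (isOfFinOrder_iff_pow_eq_one.2 ⟨k, Nat.pos_of_ne_zero hk, h.symm⟩)

lemma not_isOfFinOrder_of_norm_lt_one {q : ℂ} (hq : ‖q‖ < 1) : ¬IsOfFinOrder q :=
  fun h => hq.ne h.norm_eq_one

/-- The two recurrences make `(1 - q^(2(i+j))) a (i, j)` telescope along the antidiagonal, via
`1 - q^(2(i+j)) = (1 + q^(i+2j)) (1 - q^i) + q^i (1 - q^(2j))`, where each summand vanishes at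
one end of the antidiagonal. -/
lemma one_sub_sq_pow_mul_sum_antidiagonal_succ {R : Type*} [CommRing R] {q : R} {a : ℕ × ℕ → R}
    (step_fst : ∀ i j, (1 - q ^ (i + 1)) * a (i + 1, j) = -a (i, j))
    (step_snd : ∀ i j, (1 - (q ^ 2) ^ (j + 1)) * a (i, j + 1) = q ^ (2 * j + 1) * a (i, j))
    (n : ℕ) :
    (1 - (q ^ 2) ^ (n + 1)) * ∑ p ∈ antidiagonal (n + 1), a p = -∑ p ∈ antidiagonal n, a p :=
  calc (1 - (q ^ 2) ^ (n + 1)) * ∑ p ∈ antidiagonal (n + 1), a p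
      = ∑ p ∈ antidiagonal (n + 1), (1 + q ^ (p.1 + 2 * p.2)) * ((1 - q ^ p.1) * a p) +
          ∑ p ∈ antidiagonal (n + 1), q ^ p.1 * ((1 - (q ^ 2) ^ p.2) * a p) := by
        rw [mul_sum, ← sum_add_distrib]
        refine sum_congr rfl fun p hp => ?_
        rw [← mem_antidiagonal.1 hp]
        ring
    _ = ∑ p ∈ antidiagonal n, -((1 + q ^ (p.1 + 1 + 2 * p.2)) * a p) +
          ∑ p ∈ antidiagonal n, q ^ p.1 * (q ^ (2 * p.2 + 1) * a p) := by
        rw [Nat.sum_antidiagonal_succ, Nat.sum_antidiagonal_succ']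
        simp [step_fst, step_snd]
    _ = -∑ p ∈ antidiagonal n, a p := by
        rw [← sum_add_distrib, ← sum_neg_distrib]
        refine sum_congr rfl fun p _ => ?_
        ring

theorem sum_antidiagonal_neg_one_pow_mul_pow_sq_div_qPoch {q : ℂ} (hq : ¬IsOfFinOrder q)
    (n : ℕ) :
    ∑ p ∈ antidiagonal n,
        (-1) ^ p.1 * q ^ (p.2 ^ 2) / (qPoch q q p.1 * qPoch (q ^ 2) (q ^ 2) p.2) =
      (-1) ^ n / qPoch (q ^ 2) (q ^ 2) n := by
  set a : ℕ × ℕ → ℂ := fun p => (-1) ^ p.1 * q ^ (p.2 ^ 2) /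
    (qPoch q q p.1 * qPoch (q ^ 2) (q ^ 2) p.2) with ha
  have hq2 : ∀ j : ℕ, 1 - (q ^ 2) ^ (j + 1) ≠ 0 := fun j => by
    rw [← pow_mul]; exact one_sub_pow_ne_zero_of_not_isOfFinOrder hq (by positivity)
  have recurrence := one_sub_sq_pow_mul_sum_antidiagonal_succ (q := q) (a := a)
    (fun i j => by
      have := one_sub_pow_ne_zero_of_not_isOfFinOrder hq i.succ_ne_zero
      simp only [ha, qPoch_self_succ]
      field_simp
      ring)
    (fun i j => by
      have := hq2 j
      simp only [ha, qPoch_self_succ]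
      field_simp
      ring)
  induction n with
  | zero => simp [ha, qPoch_zero]
  | succ n ih =>
    rw [qPoch_self_succ, ← div_div, eq_div_iff (hq2 n), mul_comm, recurrence, ih]
    ring

lemma choose_two_mul_two_add_self (n : ℕ) : n.choose 2 * 2 + n = n ^ 2 := by
  induction n with
  | zero => rfl
  | succ n ih => rw [Nat.choose_succ_succ', Nat.choose_one_right]; linarith

lemma add_choose_two (i j : ℕ) : (i + j).choose 2 = i.choose 2 + j.choose 2 + i * j := by
  have hi := choose_two_mul_two_add_self i
  have hj := choose_two_mul_two_add_self j
  have hij := choose_two_mul_two_add_self (i + j)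
  linarith

lemma summable_pow_mul_pow_choose_two (r : ℝ) {t : ℝ} (ht : |t| < 1) :
    Summable fun n : ℕ => r ^ n * t ^ n.choose 2 := by
  refine summable_of_ratio_norm_eventually_le one_half_lt_one ?_
  have : Tendsto (fun n : ℕ => |r| * |t| ^ n) atTop (𝓝 0) := by
    simpa using (tendsto_pow_atTop_nhds_zero_of_lt_one (abs_nonneg t) ht).const_mul |r|
  filter_upwards [this.eventually_le_const one_half_pos] with n hn
  calc ‖r ^ (n + 1) * t ^ (n + 1).choose 2‖ = |r| * |t| ^ n * ‖r ^ n * t ^ n.choose 2‖ := by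
        simp only [Nat.choose_succ_succ', Nat.choose_one_right, Real.norm_eq_abs, abs_mul,
          abs_pow, pow_succ, pow_add]
        ring
    _ ≤ 1 / 2 * ‖r ^ n * t ^ n.choose 2‖ := by gcongr

noncomputable def eulerCoeff (Q : ℂ) (n : ℕ) : ℂ := (-1) ^ n * Q ^ n.choose 2 / qPoch Q Q n

lemma eulerCoeff_zero (Q : ℂ) : eulerCoeff Q 0 = 1 := by simp [eulerCoeff, qPoch_zero]

lemma eulerCoeff_succ_mul {Q : ℂ} (hQ : ¬IsOfFinOrder Q) (n : ℕ) :
    eulerCoeff Q (n + 1) * (1 - Q ^ (n + 1)) = -Q ^ n * eulerCoeff Q n := by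
  have := one_sub_pow_ne_zero_of_not_isOfFinOrder hQ n.succ_ne_zero
  rw [eulerCoeff, eulerCoeff, qPoch_self_succ, Nat.choose_succ_succ', Nat.choose_one_right]
  field_simp
  ring

lemma norm_eulerCoeff_mul_pow_le {Q : ℂ} (hQ : ‖Q‖ < 1) (u : ℂ) (n : ℕ) :
    ‖eulerCoeff Q n * u ^ n‖ ≤ (‖u‖ / (1 - ‖Q‖)) ^ n * ‖Q‖ ^ n.choose 2 := by
  have : eulerCoeff Q n * u ^ n = (-1) ^ n * Q ^ n.choose 2 * (u ^ n / qPoch Q Q n) := by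
    rw [eulerCoeff]; ring
  rw [this, norm_mul, norm_mul, norm_pow, norm_neg, norm_one, one_pow, one_mul, norm_pow, mul_comm]
  gcongr
  exact norm_pow_div_qPoch_le hQ hQ.le u n

lemma summable_norm_eulerCoeff_mul_pow {Q : ℂ} (hQ : ‖Q‖ < 1) (u : ℂ) :
    Summable fun n => ‖eulerCoeff Q n * u ^ n‖ :=
  (summable_pow_mul_pow_choose_two _ (by rwa [abs_norm])).of_nonneg_of_le (fun _ => norm_nonneg _)
    (norm_eulerCoeff_mul_pow_le hQ u)

lemma tsum_eulerCoeff_mul_pow_eq_one_sub_mul {Q : ℂ} (hQ : ‖Q‖ < 1) (u : ℂ) :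
    ∑' n, eulerCoeff Q n * u ^ n = (1 - u) * ∑' n, eulerCoeff Q n * (Q * u) ^ n := by
  have hs := fun v => (summable_norm_eulerCoeff_mul_pow hQ v).of_norm
  have hdiff : HasSum (fun n => eulerCoeff Q n * u ^ n - eulerCoeff Q n * (Q * u) ^ n)
      (-u * ∑' n, eulerCoeff Q n * (Q * u) ^ n) := by
    rw [← hasSum_nat_add_iff' 1, sum_range_one, pow_zero, pow_zero, mul_one, sub_self, sub_zero]
    have shift : (fun n => eulerCoeff Q (n + 1) * u ^ (n + 1) -
        eulerCoeff Q (n + 1) * (Q * u) ^ (n + 1)) = fun n => -u * (eulerCoeff Q n * (Q * u) ^ n) :=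
      funext fun n => by
        linear_combination u ^ (n + 1) * eulerCoeff_succ_mul (not_isOfFinOrder_of_norm_lt_one hQ) n
    rw [shift]
    exact (hs (Q * u)).hasSum.mul_left (-u)
  linear_combination ((hs u).hasSum.sub (hs (Q * u)).hasSum).unique hdiff

lemma tsum_eulerCoeff_mul_pow_eq_qPoch_mul {Q : ℂ} (hQ : ‖Q‖ < 1) (u : ℂ) (N : ℕ) :
    ∑' n, eulerCoeff Q n * u ^ n = qPoch u Q N * ∑' n, eulerCoeff Q n * (Q ^ N * u) ^ n := by
  induction N with
  | zero => simp [qPoch_zero]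
  | succ N ih =>
    rw [ih, tsum_eulerCoeff_mul_pow_eq_one_sub_mul hQ, qPoch_succ]
    ring_nf

lemma tendsto_tsum_eulerCoeff_mul_pow_mul_pow {Q : ℂ} (hQ : ‖Q‖ < 1) (u : ℂ) :
    Tendsto (fun N => ∑' n, eulerCoeff Q n * (Q ^ N * u) ^ n) atTop (𝓝 1) := by
  have bound : ∀ N k, ‖eulerCoeff Q k * (Q ^ N * u) ^ k‖ ≤ ‖eulerCoeff Q k * u ^ k‖ := fun N k =>
    calc ‖eulerCoeff Q k * (Q ^ N * u) ^ k‖ = ‖eulerCoeff Q k * u ^ k‖ * ‖Q‖ ^ (N * k) := by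
          rw [mul_pow, ← pow_mul, norm_mul, norm_mul, norm_mul, norm_pow]; ring
      _ ≤ ‖eulerCoeff Q k * u ^ k‖ :=
          mul_le_of_le_one_right (norm_nonneg _) (pow_le_one₀ (norm_nonneg _) hQ.le)
  have hQN := tendsto_pow_atTop_nhds_zero_of_norm_lt_one hQ
  simpa [zero_pow_eq, eulerCoeff_zero] using
    tendsto_tsum_of_dominated_convergence (summable_norm_eulerCoeff_mul_pow hQ u)
      (fun k => ((hQN.mul_const u).pow k).const_mul (eulerCoeff Q k)) (Eventually.of_forall bound)

theorem tsum_eulerCoeff_mul_pow {Q : ℂ} (hQ : ‖Q‖ < 1) (u : ℂ) :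
    ∑' n, eulerCoeff Q n * u ^ n = qPochInf u Q := by
  have := (tendsto_qPoch_qPochInf hQ u).mul (tendsto_tsum_eulerCoeff_mul_pow_mul_pow hQ u)
  rw [mul_one, ← funext (tsum_eulerCoeff_mul_pow_eq_qPoch_mul hQ u)] at this
  exact tendsto_nhds_unique tendsto_const_nhds this

theorem Summable.tsum_eq_tsum_sum_antidiagonal {α A : Type*} [AddCommMonoid α] [TopologicalSpace α]
    [ContinuousAdd α] [T3Space α] [AddCommMonoid A] [HasAntidiagonal A] {f : A × A → α}
    (hf : Summable f) : ∑' p, f p = ∑' n, ∑ p ∈ antidiagonal n, f p := by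
  conv_rhs => congr; ext; rw [← sum_finset_coe, ← tsum_fintype (L := .unconditional _)]
  rw [← HasAntidiagonal.sigmaAntidiagonalEquivProd.tsum_eq f]
  exact (HasAntidiagonal.sigmaAntidiagonalEquivProd.summable_iff.2 hf).tsum_sigma'
    fun n => (hasSum_fintype _).summable

lemma zpow_sq_add_two_mul_add_two_mul_sq_sub {G : Type*} [DivInvMonoid G] (q : G) (i j : ℕ) :
    q ^ ((i : ℤ) ^ 2 + 2 * i * j + 2 * (j : ℤ) ^ 2 - i - j) =
      (q ^ 2) ^ (i + j).choose 2 * q ^ (j ^ 2) := by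
  have h := congrArg (Nat.cast : ℕ → ℤ) (choose_two_mul_two_add_self (i + j))
  push_cast at h
  have : (i : ℤ) ^ 2 + 2 * i * j + 2 * (j : ℤ) ^ 2 - i - j =
      ((2 * (i + j).choose 2 + j ^ 2 : ℕ) : ℤ) := by
    push_cast
    linear_combination -h
  rw [this, zpow_natCast, pow_add, pow_mul]

lemma summable_pow_mul_div_qPoch_mul_qPoch {q : ℂ} (hq : ‖q‖ < 1) (u : ℂ) :
    Summable fun p : ℕ × ℕ => u ^ (p.1 + p.2) * (q ^ 2) ^ (p.1 + p.2).choose 2 *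
      ((-1) ^ p.1 * q ^ (p.2 ^ 2) / (qPoch q q p.1 * qPoch (q ^ 2) (q ^ 2) p.2)) := by
  have hq2 : ‖q ^ 2‖ < 1 := by rw [norm_pow]; exact pow_lt_one₀ (norm_nonneg q) hq two_ne_zero
  have ht : |‖q ^ 2‖| < 1 := by rwa [abs_norm]
  refine Summable.of_norm_bounded
    (((summable_pow_mul_pow_choose_two (‖u‖ / (1 - ‖q‖)) ht).mul_of_nonneg
      (summable_pow_mul_pow_choose_two (‖u‖ / (1 - ‖q ^ 2‖)) ht) (fun _ => by positivity)
      (fun _ => by positivity))) fun ⟨i, j⟩ => ?_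
  calc ‖u ^ (i + j) * (q ^ 2) ^ (i + j).choose 2 *
          ((-1) ^ i * q ^ (j ^ 2) / (qPoch q q i * qPoch (q ^ 2) (q ^ 2) j))‖
      = ‖q‖ ^ (j ^ 2) * ‖q ^ 2‖ ^ (i + j).choose 2 * ‖u ^ i / qPoch q q i‖ *
          ‖u ^ j / qPoch (q ^ 2) (q ^ 2) j‖ := by
        simp only [norm_mul, norm_div, norm_pow, norm_neg, norm_one, one_pow]
        ring
    _ ≤ 1 * (‖q ^ 2‖ ^ i.choose 2 * ‖q ^ 2‖ ^ j.choose 2) * (‖u‖ / (1 - ‖q‖)) ^ i *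
          (‖u‖ / (1 - ‖q ^ 2‖)) ^ j := by
        gcongr
        · exact pow_le_one₀ (norm_nonneg q) hq.le
        · rw [← pow_add]
          exact pow_le_pow_of_le_one (norm_nonneg _) hq2.le (by rw [add_choose_two]; omega)
        · exact norm_pow_div_qPoch_le hq hq.le u i
        · exact norm_pow_div_qPoch_le hq2 hq2.le u j
    _ = _ := by ring

theorem stmt_9 (q u : ℂ) (hq : ‖q‖ < 1) :
    ∑' p : ℕ × ℕ,
      ((-1 : ℂ) ^ p.1 * u ^ (p.1 + p.2) *
          q ^ ((p.1 : ℤ) ^ 2 + 2 * p.1 * p.2 + 2 * (p.2 : ℤ) ^ 2 - p.1 - p.2)) /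
        (qPoch q q p.1 * qPoch (q ^ 2) (q ^ 2) p.2)
      = qPochInf u (q ^ 2) := by
  have hq2 : ‖q ^ 2‖ < 1 := by rw [norm_pow]; exact pow_lt_one₀ (norm_nonneg q) hq two_ne_zero
  calc _ = ∑' p : ℕ × ℕ, u ^ (p.1 + p.2) * (q ^ 2) ^ (p.1 + p.2).choose 2 *
          ((-1) ^ p.1 * q ^ (p.2 ^ 2) / (qPoch q q p.1 * qPoch (q ^ 2) (q ^ 2) p.2)) :=
        tsum_congr fun p => by rw [zpow_sq_add_two_mul_add_two_mul_sq_sub]; ring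
    _ = ∑' n, ∑ p ∈ antidiagonal n, u ^ (p.1 + p.2) * (q ^ 2) ^ (p.1 + p.2).choose 2 *
          ((-1) ^ p.1 * q ^ (p.2 ^ 2) / (qPoch q q p.1 * qPoch (q ^ 2) (q ^ 2) p.2)) :=
        (summable_pow_mul_div_qPoch_mul_qPoch hq u).tsum_eq_tsum_sum_antidiagonal
    _ = ∑' n, eulerCoeff (q ^ 2) n * u ^ n := tsum_congr fun n => by
        rw [sum_congr rfl fun p hp => by rw [mem_antidiagonal.1 hp], ← mul_sum,
          sum_antidiagonal_neg_one_pow_mul_pow_sq_div_qPoch (not_isOfFinOrder_of_norm_lt_one hq),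
          eulerCoeff]
        ring
    _ = qPochInf u (q ^ 2) := tsum_eulerCoeff_mul_pow hq2 u
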